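/- Lemma 1 (the base collection F₀): let 1 ≤ k ≤ n, m ≥ 1, and let γ = ⟨0|1|…|n⟩ be the ordered set partition of Π into singletons in increasing order. Then F₀ = {σ₀}, where σ₀ = I₀·γ·…·γ (m copies of γ). Moreover, for any morphism δ : I[IS^m] → I[SA_k], any σ' ∈ ⋃_{d=0}^k F_d, and any nonempty A ⊆ Π: σ₀ R^A σ' holds if and only if A = {0} and σ' = I₁·γ·…·γ (m copies of γ). -/

import Mathlib

/-! ## Epistemic μ-calculus: syntax and Kripke semantics -/

/-- Positive formulas of the epistemic μ-calculus: atoms, negated atoms,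
propositional variables (indexed by `ℕ`), disjunction, conjunction,
distributed knowledge `D_A`, and greatest fixpoints `νZ.φ`. -/
inductive Formula (AP Agent : Type) : Type
  | atom  : AP → Formula AP Agent
  | natom : AP → Formula AP Agent
  | var   : ℕ → Formula AP Agent
  | or    : Formula AP Agent → Formula AP Agent → Formula AP Agent
  | and   : Formula AP Agent → Formula AP Agent → Formula AP Agent
  | know  : Set Agent → Formula AP Agent → Formula AP Agent
  | nu    : ℕ → Formula AP Agent → Formula AP Agent

/-- A Kripke model: indistinguishability relations and a labeling. -/
structure KModel (Agent AP S : Type) where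
  rel : Agent → S → S → Prop
  label : S → Set AP

/-- Derived relation `≈_A`. -/
def KModel.relD {Agent AP S : Type} (M : KModel Agent AP S) (A : Set Agent) (X Y : S) : Prop :=
  ∀ a ∈ A, M.rel a X Y

/-- The semantics `⟦φ⟧^M_ρ`. -/
def sem {Agent AP S : Type} (M : KModel Agent AP S) (ρ : ℕ → Set S) :
    Formula AP Agent → Set S
  | .atom p   => {X | p ∈ M.label X}
  | .natom p  => {X | p ∉ M.label X}
  | .var Z    => ρ Z
  | .or φ ψ   => sem M ρ φ ∪ sem M ρ ψ
  | .and φ ψ  => sem M ρ φ ∩ sem M ρ ψ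
  | .know A φ => {X | ∀ Y, M.relD A Y X → Y ∈ sem M ρ φ}
  | .nu Z φ   => ⋃₀ {T | T ⊆ sem M (Function.update ρ Z T) φ}

/-- Free propositional variables of a formula. -/
def Formula.freeVars {AP Agent : Type} : Formula AP Agent → Set ℕ
  | .atom _   => ∅
  | .natom _  => ∅
  | .var Z    => {Z}
  | .or φ ψ   => φ.freeVars ∪ ψ.freeVars
  | .and φ ψ  => φ.freeVars ∪ ψ.freeVars
  | .know _ φ => φ.freeVars
  | .nu Z φ   => φ.freeVars \ {Z}

/-- All propositional variables occurring in a formula (free or bound). -/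
def Formula.vars {AP Agent : Type} : Formula AP Agent → Set ℕ
  | .atom _   => ∅
  | .natom _  => ∅
  | .var Z    => {Z}
  | .or φ ψ   => φ.vars ∪ ψ.vars
  | .and φ ψ  => φ.vars ∪ ψ.vars
  | .know _ φ => φ.vars
  | .nu Z φ   => insert Z φ.vars

/-- Satisfaction of a closed formula (under every interpretation). -/
def Models {Agent AP S : Type} (M : KModel Agent AP S) (X : S) (φ : Formula AP Agent) : Prop :=
  ∀ ρ, X ∈ sem M ρ φ

/-- Validity of a closed formula in a model. -/
def ValidIn {Agent AP S : Type} (M : KModel Agent AP S) (φ : Formula AP Agent) : Prop :=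
  ∀ X, Models M X φ

/-! ## Simplicial models presented by facet data -/

/-- A (pure chromatic) simplicial model presented by its facets: each state
(facet) `σ` has, for every color `a ∈ Π`, a unique vertex `(a, vert σ a)` with
value in `V`; `label` gives the atomic propositions true at each facet. -/
structure SModel (n : ℕ) (V AP S : Type) where
  vert : S → Fin (n + 1) → V
  label : S → Set AP

/-- The induced Kripke model: `σ ∼_a τ` iff `σ` and `τ` share their vertex of
color `a` (i.e. `a ∈ χ(σ ∩ τ)`). -/
def SModel.toKModel {n : ℕ} {V AP S : Type} (M : SModel n V AP S) :
    KModel (Fin (n + 1)) AP S where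
  rel a σ τ := M.vert σ a = M.vert τ a
  label := M.label

/-- Satisfaction of a closed formula at a state of a simplicial model. -/
def ModelsS {n : ℕ} {V AP S : Type} (M : SModel n V AP S) (σ : S)
    (φ : Formula AP (Fin (n + 1))) : Prop :=
  ∀ ρ, σ ∈ sem M.toKModel ρ φ

/-- Validity of a closed formula in a simplicial model. -/
def ValidInS {n : ℕ} {V AP S : Type} (M : SModel n V AP S)
    (φ : Formula AP (Fin (n + 1))) : Prop :=
  ∀ σ, ModelsS M σ φ

/-- A morphism of simplicial models: a color-preserving vertex map `vmap`
sending every simplex of the source to a simplex of the target (hence every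
facet `σ` to the facet `smap σ`), preserving the labeling. -/
structure SMorphism {n : ℕ} {V V' AP S S' : Type}
    (M : SModel n V AP S) (M' : SModel n V' AP S') where
  vmap : Fin (n + 1) × V → Fin (n + 1) × V'
  color : ∀ p, (vmap p).1 = p.1
  smap : S → S'
  vert_comm : ∀ σ a, vmap (a, M.vert σ a) = (a, M'.vert (smap σ) a)
  label_eq : ∀ σ, M.label σ = M'.label (smap σ)

/-! ## Ordered set partitions, iterated immediate snapshot views, and the
product update models `I[IS^m]` and `I[SA_k]` -/

/-- An ordered set partition `⟨A₁|A₂|…|A_r⟩` of `Π = Fin (n+1)`. -/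
structure OSP (n : ℕ) where
  parts : List (Finset (Fin (n + 1)))
  nonempty : ∀ A ∈ parts, A.Nonempty
  pairwise_disjoint : parts.Pairwise Disjoint
  cover : ∀ a : Fin (n + 1), ∃ A ∈ parts, a ∈ A

/-- `view*_a(γ) = A₁ ∪ … ∪ A_q` where `a ∈ A_q`: the set of processes seen by
`a` in the snapshot round `γ`. -/
def OSP.viewSet {n : ℕ} (γ : OSP n) (a : Fin (n + 1)) : Finset (Fin (n + 1)) :=
  (γ.parts.take (γ.parts.findIdx (fun A => decide (a ∈ A)) + 1)).foldr (· ∪ ·) ∅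

/-- Iterated snapshot views: `base v` is an initial input value, and `snap f`
is the view of a process after a snapshot round, recording (for exactly the
processes it has seen) their views at the previous round. -/
inductive View (n : ℕ) : Type
  | base : Fin (n + 1) → View n
  | snap : (Fin (n + 1) → Option (View n)) → View n

/-- `iisView X m γ a` is `view_a(X·γ₁·…·γ_m)`, the view of process `a` in the
facet `X·γ₁·…·γ_m` of the `m`-iterated standard chromatic subdivision of the
input facet `X` (where `γ i` is the `(i+1)`-st round's ordered set partition). -/
def iisView {n : ℕ} (X : Fin (n + 1) → Fin (n + 1)) :
    (m : ℕ) → (Fin m → OSP n) → Fin (n + 1) → View n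
  | 0, _, a => .base (X a)
  | m + 1, γ, a => .snap (fun b =>
      if b ∈ (γ (Fin.last m)).viewSet a then
        some (iisView X m (fun i => γ i.castSucc) b)
      else none)

/-- Facets of `I[IS^m]`: an input facet `X ∈ F(I)` (given by the input values
of the `n+1` processes) together with the `m` rounds' ordered set partitions. -/
def IISState (n m : ℕ) : Type := (Fin (n + 1) → Fin (n + 1)) × (Fin m → OSP n)

/-- Atomic propositions with factual change: `Sum.inl (a,v)` is `input_{a,v}`
and `Sum.inr (a,d)` is `decide_{a,d}`. -/
abbrev APfc (n : ℕ) := (Fin (n + 1) × Fin (n + 1)) ⊕ (Fin (n + 1) × Fin (n + 1))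

/-- The product update model `I[IS^m]` of the `m`-round iterated immediate
snapshot protocol (labels mention only inputs). -/
def IISmodel (n m : ℕ) : SModel n (View n) (APfc n) (IISState n m) where
  vert σ a := iisView σ.1 m σ.2 a
  label σ := {p | ∃ a, p = Sum.inl (a, σ.1 a)}

/-- Facets of `I[SA_k]`: a pair of an input assignment and an output
assignment of the `n+1` processes, such that at most `k` values are decided
and every decided value is some process's input. -/
def SAState (n k : ℕ) : Type :=
  {p : (Fin (n + 1) → Fin (n + 1)) × (Fin (n + 1) → Fin (n + 1)) //
    (Finset.univ.image p.2).card ≤ k ∧ Finset.univ.image p.2 ⊆ Finset.univ.image p.1}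

/-- The product update model `I[SA_k]` of the `k`-set agreement task
(labels mention only inputs). -/
def SAmodel (n k : ℕ) : SModel n (Fin (n + 1) × Fin (n + 1)) (APfc n) (SAState n k) where
  vert σ a := (σ.val.1 a, σ.val.2 a)
  label σ := {p | ∃ a, p = Sum.inl (a, σ.val.1 a)}

/-- The factual-change extension `I[SA_k]^fc`: same Kripke frame, labels also
mention the decided values. -/
def SAfc (n k : ℕ) : SModel n (Fin (n + 1) × Fin (n + 1)) (APfc n) (SAState n k) where
  vert σ a := (σ.val.1 a, σ.val.2 a)
  label σ := {p | (∃ a, p = Sum.inl (a, σ.val.1 a)) ∨ ∃ a, p = Sum.inr (a, σ.val.2 a)}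

/-- The factual-change model `I[IS^m]^{fc,δ}` for a morphism
`δ : I[IS^m] → I[SA_k]`: the Kripke frame of `I[IS^m]` with labels pulled
back from `I[SA_k]^fc` along `δ`. -/
def IISfc (n m k : ℕ) (δ : SMorphism (IISmodel n m) (SAmodel n k)) :
    SModel n (View n) (APfc n) (IISState n m) where
  vert σ a := iisView σ.1 m σ.2 a
  label σ := (SAfc n k).label (δ.smap σ)

/-! ## The concrete specification formulas -/

/-- Finite conjunction of a list of formulas (the empty conjunction is the
valid formula `νZ.Z`; all conjunctions used below are over nonempty lists). -/
def conjF {AP Agent : Type} : List (Formula AP Agent) → Formula AP Agent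
  | [] => .nu 0 (.var 0)
  | [φ] => φ
  | φ :: l => .and φ (conjF l)

/-- Finite disjunction of a list of formulas (all disjunctions used below are
over nonempty lists). -/
def disjF {AP Agent : Type} : List (Formula AP Agent) → Formula AP Agent
  | [] => .nu 0 (.var 0)
  | [φ] => φ
  | φ :: l => .or φ (disjF l)

/-- The list of all agents `0,…,n`. -/
def allAgents (n : ℕ) : List (Fin (n + 1)) := List.finRange (n + 1)

/-- All pairs of agents. -/
def agentPairs (n : ℕ) : List (Fin (n + 1) × Fin (n + 1)) :=
  (allAgents n).flatMap (fun i => (allAgents n).map (fun j => (i, j)))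

/-- The list of all nonempty subsets of `Π`. -/
noncomputable def neSubsets (n : ℕ) : List (Finset (Fin (n + 1))) :=
  ((Finset.univ : Finset (Fin (n + 1))).powerset.filter (fun A => A.Nonempty)).toList

/-- `IFUN`: each process has exactly one input value
(`¬(p ∧ q)` is written positively as `¬p ∨ ¬q`). -/
def IFUN (n : ℕ) : Formula (APfc n) (Fin (n + 1)) :=
  conjF ((allAgents n).map (fun a => .and
    (conjF (((agentPairs n).filter (fun p => decide (p.1 ≠ p.2))).map
      (fun p => .or (.natom (Sum.inl (a, p.1))) (.natom (Sum.inl (a, p.2))))))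
    (disjF ((allAgents n).map (fun i => .atom (Sum.inl (a, i)))))))

/-- `OFUN`: each process decides exactly one output value. -/
def OFUN (n : ℕ) : Formula (APfc n) (Fin (n + 1)) :=
  conjF ((allAgents n).map (fun a => .and
    (conjF (((agentPairs n).filter (fun p => decide (p.1 ≠ p.2))).map
      (fun p => .or (.natom (Sum.inr (a, p.1))) (.natom (Sum.inr (a, p.2))))))
    (disjF ((allAgents n).map (fun d => .atom (Sum.inr (a, d)))))))

/-- `VALID`: every decided value is some process's input. -/
def VALIDf (n : ℕ) : Formula (APfc n) (Fin (n + 1)) :=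
  conjF ((allAgents n).map (fun a =>
    conjF ((allAgents n).map (fun d =>
      .or (.natom (Sum.inr (a, d)))
          (disjF ((allAgents n).map (fun b => .atom (Sum.inl (b, d)))))))))

/-- `AGREE_k`: at most `k` different values are decided. -/
noncomputable def AGREEf (n k : ℕ) : Formula (APfc n) (Fin (n + 1)) :=
  disjF ((((Finset.univ : Finset (Fin (n + 1))).powerset.filter
      (fun A => 0 < A.card ∧ A.card ≤ k)).toList).map (fun A =>
    conjF ((allAgents n).map (fun a =>
      disjF (A.toList.map (fun d => .atom (Sum.inr (a, d))))))))

/-- `KNOW`: a decided value is distributed knowledge in any group containing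
the decider. -/
noncomputable def KNOWf (n : ℕ) : Formula (APfc n) (Fin (n + 1)) :=
  conjF ((neSubsets n).map (fun A =>
    conjF (A.toList.map (fun a =>
      conjF ((allAgents n).map (fun d =>
        .or (.natom (Sum.inr (a, d)))
            (.know (↑A) (.atom (Sum.inr (a, d))))))))))

open Fin.NatCast in
/-- `DEC_A = ⋀_{d=0}^{|A|−1} ⋁_{a∈A} decide_{a,d}`. -/
noncomputable def DECf (n : ℕ) (A : Finset (Fin (n + 1))) :
    Formula (APfc n) (Fin (n + 1)) :=
  conjF ((List.range A.card).map (fun (d : ℕ) =>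
    disjF (A.toList.map (fun a => .atom (Sum.inr (a, (d : Fin (n + 1))))))))

open Fin.NatCast in
/-- `¬DEC_A` in positive (de Morgan) form. -/
noncomputable def NDECf (n : ℕ) (A : Finset (Fin (n + 1))) :
    Formula (APfc n) (Fin (n + 1)) :=
  disjF ((List.range A.card).map (fun (d : ℕ) =>
    conjF (A.toList.map (fun a => .natom (Sum.inr (a, (d : Fin (n + 1))))))))

/-- The unsolvability formula
`Φ_k = νZ.[OFUN ∧ VALID ∧ ⋀_{∅≠A⊆Π}(DEC_A ⇒ D_A(KNOW ∧ AGREE_k ∧ Z))]`. -/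
noncomputable def Phi (n k : ℕ) : Formula (APfc n) (Fin (n + 1)) :=
  .nu 0 (.and (OFUN n) (.and (VALIDf n)
    (conjF ((neSubsets n).map (fun A =>
      .or (NDECf n A)
          (.know (↑A) (.and (KNOWf n) (.and (AGREEf n k) (.var 0)))))))))

/-! ## Restricted-form ordered set partitions and the flip operation -/

/-- The trailing singleton parts `⟨d+1|d+2|…|n⟩`. -/
def trailing (n d : ℕ) : List (Finset (Fin (n + 1))) :=
  ((List.finRange (n + 1)).filter (fun (i : Fin (n + 1)) => decide (d < (i : ℕ)))).map (fun i => {i})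

/-- `γ` has the restricted form `⟨A₁|…|A_r|d+1|…|n⟩`, with prefix `l = [A₁,…,A_r]`
an ordered set partition of `[0,d]` followed by the singletons `d+1,…,n`. -/
def RestForm (n d : ℕ) (γ : OSP n) (l : List (Finset (Fin (n + 1)))) : Prop :=
  γ.parts = l ++ trailing n d ∧ ∀ A ∈ l, ∀ a ∈ A, (a : ℕ) ≤ d

/-- `flip_A` on the prefix `[A₁,…,A_r]`, for `A = [0,d] ∖ {b}`:
moves `b` one position later in the ordered set partition. -/
def flipB {n : ℕ} (b : Fin (n + 1)) :
    List (Finset (Fin (n + 1))) → List (Finset (Fin (n + 1)))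
  | [] => []
  | A :: rest =>
    if b ∈ A then
      if 1 < A.card then A.erase b :: {b} :: rest
      else
        match rest with
        | [] => [A]
        | B :: rest' => insert b B :: rest'
    else A :: flipB b rest

/-! ## The input facets `I_d`, the collections `F_d`, and the relation `R^A` -/

open Fin.NatCast in
/-- The input facet `I_d = {(i,i) | i ≤ d} ∪ {(i,d) | d < i}` (as an input
assignment). -/
def Idf (n d : ℕ) : Fin (n + 1) → Fin (n + 1) :=
  fun i => if (i : ℕ) ≤ d then i else (d : Fin (n + 1))

/-- The collection `F_d ⊆ F(I[IS^m])`: facets `I_d·γ₁·…·γ_m` where every `γ_i`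
has the restricted form `⟨A_{i,1}|…|A_{i,r_i}|d+1|…|n⟩`. -/
def Fset (n m d : ℕ) : Set (IISState n m) :=
  {σ | σ.1 = Idf n d ∧ ∀ i, ∃ l, RestForm n d (σ.2 i) l}

/-- The singletons-in-increasing-order partition `⟨0|1|…|n⟩`. -/
def gbar (n : ℕ) : OSP n where
  parts := (List.finRange (n + 1)).map (fun i => {i})
  nonempty := by
    intro A hA
    rcases List.mem_map.mp hA with ⟨i, _, rfl⟩
    exact Finset.singleton_nonempty i
  pairwise_disjoint := by
    rw [List.pairwise_map]
    exact (List.nodup_finRange (n + 1)).imp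
      (fun h => Finset.disjoint_singleton.mpr h)
  cover := by
    intro a
    exact ⟨{a}, List.mem_map.mpr ⟨a, List.mem_finRange a, rfl⟩, Finset.mem_singleton_self a⟩

/-- The relation `R^A` on `⋃_{d=0}^k F_d` (for a morphism
`δ : I[IS^m] → I[SA_k]`): `σ R^A σ'` iff `σ ≈_A σ'`, `σ ≠ σ'`, `A ⊆ [0,|A|]`,
`σ ∈ F_d`, `σ' ∈ F_e` with `d,e ≤ k`, `max d e = |A|`, `|d − e| ≤ 1`, and both
`σ` and `σ'` satisfy `DEC_A` in `I[IS^m]^{fc,δ}`. -/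
noncomputable def Rrel (n m k : ℕ) (δ : SMorphism (IISmodel n m) (SAmodel n k))
    (A : Finset (Fin (n + 1))) (σ σ' : IISState n m) : Prop :=
  (IISmodel n m).toKModel.relD (↑A) σ σ' ∧ σ ≠ σ' ∧
  (∀ a ∈ A, (a : ℕ) ≤ A.card) ∧
  (∃ d e : ℕ, d ≤ k ∧ e ≤ k ∧ σ ∈ Fset n m d ∧ σ' ∈ Fset n m e ∧
    max d e = A.card ∧ d ≤ e + 1 ∧ e ≤ d + 1) ∧
  ModelsS (IISfc n m k δ) σ (DECf n A) ∧ ModelsS (IISfc n m k δ) σ' (DECf n A)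

/-! ## Carrier sets, contention sets, and the k-concurrency model -/

/-- `carrier_a(X·γ₁·γ₂) = ⋃_{b ∈ view*_a(γ₂)} view*_b(γ₁)`. -/
def carrierSet (n : ℕ) (σ : IISState n 2) (a : Fin (n + 1)) : Finset (Fin (n + 1)) :=
  ((σ.2 1).viewSet a).biUnion (σ.2 0).viewSet

/-- The contention sets of a facet of `I[IS^2]`. -/
def ContSets (n : ℕ) (σ : IISState n 2) : Set (Finset (Fin (n + 1))) :=
  {A | ∀ a ∈ A, carrierSet n σ a = A.biUnion (carrierSet n σ)}

/-- The facets of the `k`-concurrency model `R_k`. -/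
def kConcStates (n k : ℕ) : Set (IISState n 2) :=
  {σ | ∀ A ∈ ContSets n σ, A.card ≤ k}

/-- The `k`-concurrency model `R_k`, the simplicial submodel of `I[IS^2]` on
the facets in `kConcStates`. -/
def RModel (n k : ℕ) : SModel n (View n) (APfc n) {σ : IISState n 2 // σ ∈ kConcStates n k} where
  vert σ a := iisView σ.val.1 2 σ.val.2 a
  label σ := {p | ∃ a, p = Sum.inl (a, σ.val.1 a)}

/-! ## Auxiliary lemmas for Lemma 1 -/

section Aux

lemma osp_ext {n : ℕ} {γ γ' : OSP n} (h : γ.parts = γ'.parts) : γ = γ' := by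
  cases γ; cases γ'; cases h; rfl

lemma mem_foldr_union {n : ℕ} {x : Fin (n + 1)} :
    ∀ {l : List (Finset (Fin (n + 1)))} {A : Finset (Fin (n + 1))},
      A ∈ l → x ∈ A → x ∈ l.foldr (· ∪ ·) ∅
  | [], A, h, _ => by cases h
  | B :: l, A, h, hx => by
    rcases List.mem_cons.mp h with rfl | h
    · exact Finset.mem_union_left _ hx
    · exact Finset.mem_union_right _ (mem_foldr_union h hx)

lemma viewSelf {n : ℕ} (γ : OSP n) (a : Fin (n + 1)) : a ∈ γ.viewSet a := by
  obtain ⟨A, hA, ha⟩ := γ.cover a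
  have hlt : γ.parts.findIdx (fun A => decide (a ∈ A)) < γ.parts.length :=
    List.findIdx_lt_length_of_exists ⟨A, hA, by simpa using ha⟩
  set j := γ.parts.findIdx (fun A => decide (a ∈ A)) with hj
  have hmem : a ∈ γ.parts[j] := by simpa using (List.findIdx_getElem (w := hlt))
  have hA' : γ.parts[j] ∈ γ.parts.take (j + 1) := by
    have hlen : j < (γ.parts.take (j + 1)).length := by
      simp [List.length_take]; omega
    have heq : (γ.parts.take (j + 1))[j] = γ.parts[j] := List.getElem_take
    exact heq ▸ List.getElem_mem hlen
  exact mem_foldr_union hA' hmem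

lemma viewSet_eq_head {n : ℕ} (γ : OSP n) (A : Finset (Fin (n + 1)))
    (rest : List (Finset (Fin (n + 1)))) (h : γ.parts = A :: rest)
    (a : Fin (n + 1)) (ha : a ∈ A) : γ.viewSet a = A ∪ ∅ := by
  unfold OSP.viewSet
  rw [h, List.findIdx_cons]
  simp [ha]

lemma head_subset_viewSet {n : ℕ} (γ : OSP n) (A : Finset (Fin (n + 1)))
    (rest : List (Finset (Fin (n + 1)))) (h : γ.parts = A :: rest)
    (a : Fin (n + 1)) : A ⊆ γ.viewSet a := by
  intro x hx
  refine mem_foldr_union (A := A) ?_ hx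
  rw [h]
  cases h' : List.findIdx (fun B => decide (a ∈ B)) (A :: rest) with
  | zero => simp
  | succ j => simp

open Fin.NatCast in
lemma trailing_eq (n d : ℕ) : trailing n d =
    ((List.range (n + 1)).filter (fun j => decide (d < j))).map
      (fun j => ({((j : ℕ) : Fin (n + 1))} : Finset (Fin (n + 1)))) := by
  have hfr : List.finRange (n + 1) =
      (List.range (n + 1)).map (fun j : ℕ => ((j : ℕ) : Fin (n + 1))) := by
    apply List.ext_getElem
    · simp
    · intro i h1 h2
      simp only [List.getElem_finRange, List.getElem_map, List.getElem_range]
      ext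
      simp [Fin.val_cast_of_lt (show i < n + 1 by simpa using h1)]
  unfold trailing
  rw [hfr, List.filter_map, List.map_map]
  congr 1
  apply List.filter_congr
  intro j hj
  simp [Fin.val_cast_of_lt (List.mem_range.mp hj)]

lemma filter_range_zero (n : ℕ) :
    (List.range (n + 1)).filter (fun j => decide (0 < j)) = (List.range n).map Nat.succ := by
  rw [List.range_succ_eq_map, List.filter_cons]
  norm_num

lemma filter_range_one (n : ℕ) :
    (List.range (n + 2)).filter (fun j => decide (1 < j)) =
      ((List.range n).map Nat.succ).map Nat.succ := by
  rw [List.range_succ_eq_map, List.filter_cons]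
  norm_num
  rw [List.filter_map]
  have h : (List.range (n + 1)).filter (fun a => decide (1 < a.succ))
      = (List.range (n + 1)).filter (fun j => decide (0 < j)) := by
    apply List.filter_congr
    intro a _
    simp
  show ((List.range (n + 1)).filter fun a => decide (1 < a.succ)).map Nat.succ = _
  rw [h, filter_range_zero]
  simp [List.map_map]

open Fin.NatCast in
lemma mem_trailing {n d : ℕ} {A : Finset (Fin (n + 1))} (h : A ∈ trailing n d) :
    ∃ j : ℕ, d < j ∧ j < n + 1 ∧ A = {((j : ℕ) : Fin (n + 1))} := by
  rw [trailing_eq] at h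
  obtain ⟨j, hj, rfl⟩ := List.mem_map.mp h
  obtain ⟨hj1, hj2⟩ := List.mem_filter.mp hj
  exact ⟨j, by simpa using hj2, List.mem_range.mp hj1, rfl⟩

lemma gbar_parts_zero (n : ℕ) :
    (gbar n).parts = ({0} : Finset (Fin (n + 1))) :: trailing n 0 := by
  show (List.finRange (n + 1)).map (fun i => ({i} : Finset (Fin (n + 1)))) = _
  rw [trailing_eq, filter_range_zero, List.finRange_succ, List.map_cons]
  congr 1
  apply List.ext_getElem
  · simp
  · intro i h1 h2
    simp only [List.getElem_map, List.getElem_finRange, List.getElem_range]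
    congr 1
    simp only [List.length_map, List.length_finRange] at h1
    rw [Fin.ext_iff, Fin.val_succ, Fin.val_cast_of_lt (by omega)]
    simp

lemma gbar_parts_one (n : ℕ) :
    (gbar (n + 1)).parts =
      ({0} : Finset (Fin (n + 2))) :: ({1} : Finset (Fin (n + 2))) :: trailing (n + 1) 1 := by
  show (List.finRange (n + 2)).map (fun i => ({i} : Finset (Fin (n + 2)))) = _
  rw [trailing_eq, filter_range_one, List.finRange_succ, List.finRange_succ,
    List.map_cons, List.map_cons, List.map_cons, Fin.succ_zero_eq_one]
  congr 2
  rw [List.map_map, List.map_map, List.map_map]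
  apply List.ext_getElem
  · simp
  · intro i h1 h2
    simp only [List.getElem_map, List.getElem_finRange, List.getElem_range, Function.comp]
    congr 1
    simp only [List.length_map, List.length_finRange] at h1
    rw [Fin.ext_iff, Fin.val_succ, Fin.val_succ, Fin.val_cast_of_lt (by omega)]
    simp

lemma viewSet_gbar_zero (n : ℕ) : (gbar n).viewSet 0 = ({0} : Finset (Fin (n + 1))) := by
  rw [viewSet_eq_head (gbar n) {0} (trailing n 0) (gbar_parts_zero n) 0 (Finset.mem_singleton_self 0)]
  simp

lemma Idf_zero {n : ℕ} (a : Fin (n + 1)) : Idf n 0 a = 0 := by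
  unfold Idf
  split
  · refine Fin.ext ?_
    rw [Fin.val_zero]
    omega
  · simp

lemma Idf_one_zero {n : ℕ} : Idf (n + 1) 1 0 = 0 := by simp [Idf]

lemma Idf_one_one {n : ℕ} : Idf (n + 1) 1 1 = 1 := by simp [Idf]

lemma Idf_ge_one {n d : ℕ} (hd : 1 ≤ d) : Idf (n + 1) d 1 = 1 := by
  simp [Idf, Fin.val_one, hd]

lemma inputEq {n : ℕ} : ∀ (m : ℕ) (γ γ' : Fin m → OSP n) (X Y : Fin (n + 1) → Fin (n + 1))
    (a : Fin (n + 1)), iisView X m γ a = iisView Y m γ' a → X a = Y a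
  | 0, _, _, X, Y, a, h => by
    simpa [iisView] using h
  | m + 1, γ, γ', X, Y, a, h => by
    simp only [iisView] at h
    injection h with h
    have h2 := congrFun h a
    rw [if_pos (viewSelf _ a), if_pos (viewSelf _ a)] at h2
    exact inputEq m _ _ X Y a (Option.some.inj h2)

lemma view0_eq {n : ℕ} : ∀ (m : ℕ) (X Y : Fin (n + 1) → Fin (n + 1)), X 0 = Y 0 →
    iisView X m (fun _ => gbar n) 0 = iisView Y m (fun _ => gbar n) 0
  | 0, X, Y, h => by simp [iisView, h]
  | m + 1, X, Y, h => by
    simp only [iisView]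
    congr 1
    funext b
    by_cases hb : b ∈ (gbar n).viewSet 0
    · have hb0 : b = 0 := by
        rw [viewSet_gbar_zero] at hb
        simpa using hb
      subst hb0
      rw [view0_eq m X Y h]
    · rw [if_neg hb, if_neg hb]

lemma key_views {n : ℕ} : ∀ (m : ℕ) (γ' : Fin m → OSP (n + 1)),
    iisView (Idf (n + 1) 0) m (fun _ => gbar (n + 1)) 0 = iisView (Idf (n + 1) 1) m γ' 0 →
    ∀ i, (1 : Fin (n + 2)) ∉ (γ' i).viewSet 0
  | 0, _, _, i => i.elim0
  | m + 1, γ', h, i => by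
    simp only [iisView] at h
    injection h with h
    refine Fin.lastCases ?_ ?_ i
    · have h1 := congrFun h 1
      rw [if_neg (by rw [viewSet_gbar_zero]; simp)] at h1
      intro hmem
      rw [if_pos hmem] at h1
      exact absurd h1 (by simp)
    · intro j
      have h0 := congrFun h 0
      rw [if_pos (by rw [viewSet_gbar_zero]; simp), if_pos (viewSelf _ 0)] at h0
      exact key_views m (fun i => γ' i.castSucc) (Option.some.inj h0) j

lemma rest0_char {n : ℕ} (γ : OSP n) (l : List (Finset (Fin (n + 1))))
    (h : RestForm n 0 γ l) : γ = gbar n := by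
  obtain ⟨hp, hle⟩ := h
  have hall : ∀ A ∈ l, A = ({0} : Finset (Fin (n + 1))) := by
    intro A hA
    have hne := γ.nonempty A (by rw [hp]; exact List.mem_append_left _ hA)
    have h0 : ∀ x ∈ A, x = (0 : Fin (n + 1)) := by
      intro x hx
      refine Fin.ext ?_
      rw [Fin.val_zero]
      exact Nat.le_zero.mp (hle A hA x hx)
    obtain ⟨y, hy⟩ := hne
    have h0A : (0 : Fin (n + 1)) ∈ A := (h0 y hy) ▸ hy
    ext x
    simp only [Finset.mem_singleton]
    exact ⟨fun hx => h0 x hx, fun hx => hx ▸ h0A⟩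
  obtain ⟨A, hA, h0A⟩ := γ.cover 0
  rw [hp] at hA
  have hAl : A ∈ l := by
    rcases List.mem_append.mp hA with h | h
    · exact h
    · exfalso
      obtain ⟨j, hj1, hj2, rfl⟩ := mem_trailing h
      have hc := Finset.mem_singleton.mp h0A
      have := congrArg Fin.val hc
      rw [Fin.val_zero, Fin.val_cast_of_lt hj2] at this
      omega
  cases l with
  | nil => exact absurd hAl List.not_mem_nil
  | cons B l' =>
    have hB := hall B List.mem_cons_self
    cases l' with
    | cons C l'' =>
      exfalso
      have hC := hall C (by simp)
      have hpd := γ.pairwise_disjoint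
      rw [hp] at hpd
      have hd : Disjoint B C := by
        have h1 := (List.pairwise_append.mp hpd).1
        exact (List.pairwise_cons.mp h1).1 C (by simp)
      rw [hB, hC] at hd
      simp at hd
    | nil =>
      apply osp_ext
      rw [hp, hB, gbar_parts_zero]
      rfl

lemma rest1_char {n : ℕ} (γ : OSP (n + 1)) (l : List (Finset (Fin (n + 2))))
    (h : RestForm (n + 1) 1 γ l) (h1 : (1 : Fin (n + 2)) ∉ γ.viewSet 0) :
    γ = gbar (n + 1) := by
  obtain ⟨hp, hle⟩ := h
  have hmem01 : ∀ A ∈ l, ∀ x ∈ A, x = (0 : Fin (n + 2)) ∨ x = 1 := by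
    intro A hA x hx
    have hx1 := hle A hA x hx
    rcases Nat.le_one_iff_eq_zero_or_eq_one.mp hx1 with h | h
    · left; exact Fin.ext (by rw [Fin.val_zero]; exact h)
    · right; exact Fin.ext (by rw [Fin.val_one]; exact h)
  have hcover : ∀ x : Fin (n + 2), (x : ℕ) ≤ 1 → ∃ A ∈ l, x ∈ A := by
    intro x hx
    obtain ⟨A, hA, hxa⟩ := γ.cover x
    rw [hp] at hA
    rcases List.mem_append.mp hA with h | h
    · exact ⟨A, h, hxa⟩
    · exfalso
      obtain ⟨j, hj1, hj2, rfl⟩ := mem_trailing h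
      have hc := Finset.mem_singleton.mp hxa
      have := congrArg Fin.val hc
      rw [Fin.val_cast_of_lt hj2] at this
      omega
  cases l with
  | nil =>
    obtain ⟨A, hA, _⟩ := hcover 0 (by simp)
    exact absurd hA List.not_mem_nil
  | cons A l' =>
    by_cases h0A : (0 : Fin (n + 2)) ∈ A
    case neg =>
      exfalso
      obtain ⟨y, hy⟩ := γ.nonempty A (by rw [hp]; exact List.mem_append_left _ (by simp))
      have hy1 : y = 1 := by
        rcases hmem01 A (by simp) y hy with h | h
        · exact absurd (h ▸ hy) h0A
        · exact h
      exact h1 (head_subset_viewSet γ A _ (by rw [hp]; rfl) 0 (hy1 ▸ hy))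
    case pos =>
      have hview := viewSet_eq_head γ A _ (by rw [hp]; rfl) 0 h0A
      have h1A : (1 : Fin (n + 2)) ∉ A := fun hx =>
        h1 (by rw [hview]; exact Finset.mem_union_left _ hx)
      have hA0 : A = ({0} : Finset (Fin (n + 2))) := by
        ext x
        simp only [Finset.mem_singleton]
        constructor
        · intro hx
          rcases hmem01 A (by simp) x hx with h | h
          · exact h
          · exact absurd (h ▸ hx) h1A
        · intro hx; exact hx ▸ h0A
      obtain ⟨B, hB, h1B⟩ := hcover 1 (by rw [Fin.val_one])
      have hBl' : B ∈ l' := by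
        rcases List.mem_cons.mp hB with rfl | h
        · exact absurd h1B h1A
        · exact h
      have hpd := γ.pairwise_disjoint
      rw [hp] at hpd
      have hpd1 : List.Pairwise Disjoint (A :: l') := (List.pairwise_append.mp hpd).1
      have hAl' : ∀ C ∈ l', Disjoint A C := fun C hC => (List.pairwise_cons.mp hpd1).1 C hC
      have hall1 : ∀ C ∈ l', C = ({1} : Finset (Fin (n + 2))) := by
        intro C hC
        have h0C : (0 : Fin (n + 2)) ∉ C := fun h0c =>
          Finset.disjoint_left.mp (hAl' C hC) h0A h0c
        obtain ⟨y, hy⟩ := γ.nonempty C (by rw [hp]; exact List.mem_append_left _ (by simp [hC]))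
        have hy1 : y = 1 := by
          rcases hmem01 C (by simp [hC]) y hy with h | h
          · exact absurd (h ▸ hy) h0C
          · exact h
        ext x
        simp only [Finset.mem_singleton]
        constructor
        · intro hx
          rcases hmem01 C (by simp [hC]) x hx with h | h
          · exact absurd (h ▸ hx) h0C
          · exact h
        · intro hx; exact hx ▸ (hy1 ▸ hy)
      cases l' with
      | nil => exact absurd hBl' List.not_mem_nil
      | cons C l'' =>
        cases l'' with
        | nil =>
          apply osp_ext
          rw [hp, hA0, hall1 C (by simp), gbar_parts_one]
          rfl
        | cons D l''' =>
          exfalso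
          have hCD : Disjoint C D :=
            (List.pairwise_cons.mp (List.pairwise_cons.mp hpd1).2).1 D (by simp)
          rw [hall1 C (by simp), hall1 D (by simp)] at hCD
          simp at hCD

lemma restform_gbar_zero (n : ℕ) :
    RestForm n 0 (gbar n) [({0} : Finset (Fin (n + 1)))] := by
  constructor
  · rw [gbar_parts_zero]; rfl
  · intro A hA a ha
    simp only [List.mem_singleton] at hA
    subst hA
    simp only [Finset.mem_singleton] at ha
    subst ha
    simp

lemma restform_gbar_one (n : ℕ) :
    RestForm (n + 1) 1 (gbar (n + 1)) [({0} : Finset (Fin (n + 2))), {1}] := by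
  constructor
  · rw [gbar_parts_one]; rfl
  · intro A hA a ha
    rcases List.mem_cons.mp hA with rfl | hA
    · simp only [Finset.mem_singleton] at ha
      subst ha
      simp
    · simp only [List.mem_singleton] at hA
      subst hA
      simp only [Finset.mem_singleton] at ha
      subst ha
      simp [Fin.val_one]

lemma Fset0 {n m : ℕ} : Fset n m 0 = {((Idf n 0, fun _ => gbar n) : IISState n m)} := by
  ext σ
  simp only [Fset, Set.mem_setOf_eq, Set.mem_singleton_iff]
  constructor
  · rintro ⟨h1, h2⟩
    have h3 : σ.2 = fun _ => gbar n := by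
      funext i
      obtain ⟨l, hl⟩ := h2 i
      exact rest0_char _ l hl
    exact Prod.ext h1 h3
  · rintro rfl
    exact ⟨rfl, fun i => ⟨[{0}], restform_gbar_zero n⟩⟩

lemma DECf_singleton {n : ℕ} :
    DECf n ({0} : Finset (Fin (n + 1))) =
      Formula.atom (Sum.inr ((0 : Fin (n + 1)), (0 : Fin (n + 1)))) := by
  simp [DECf, conjF, disjF, Finset.card_singleton, List.range_succ,
    Finset.toList_singleton]

lemma decide_zero {n m k : ℕ} (δ : SMorphism (IISmodel n m) (SAmodel n k))
    (σ : IISState n m) (h : σ.1 = Idf n 0) (a : Fin (n + 1)) :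
    (δ.smap σ).val.2 a = 0 := by
  have hl := δ.label_eq σ
  have hin : ∀ b, (δ.smap σ).val.1 b = 0 := by
    intro b
    have hmem : (Sum.inl (b, (δ.smap σ).val.1 b) : APfc n) ∈
        (SAmodel n k).label (δ.smap σ) := ⟨b, rfl⟩
    rw [← hl] at hmem
    obtain ⟨c, hc⟩ := hmem
    obtain ⟨h1, h2⟩ := Prod.mk.injEq .. ▸ Sum.inl.inj hc
    rw [h2, h, Idf_zero]
  have hsub := (δ.smap σ).property.2
  have hmem2 : (δ.smap σ).val.2 a ∈ Finset.univ.image (δ.smap σ).val.1 :=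
    hsub (Finset.mem_image_of_mem _ (Finset.mem_univ a))
  obtain ⟨b, _, hb⟩ := Finset.mem_image.mp hmem2
  rw [← hb, hin b]

lemma models_DEC0 {n m k : ℕ} (δ : SMorphism (IISmodel n m) (SAmodel n k))
    (σ : IISState n m) (hd : (δ.smap σ).val.2 0 = 0) :
    ModelsS (IISfc n m k δ) σ (DECf n ({0} : Finset (Fin (n + 1)))) := by
  rw [DECf_singleton]
  intro ρ
  show (Sum.inr ((0 : Fin (n + 1)), (0 : Fin (n + 1))) : APfc n) ∈
    (IISfc n m k δ).toKModel.label σ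
  exact Or.inr ⟨0, by rw [hd]⟩

end Aux

/-- **Lemma 1: the base collection `F₀`.** Let `1 ≤ k ≤ n` and
`m ≥ 1`, and let `γ̄ = ⟨0|1|…|n⟩`. Then `F₀ = {σ₀}` where
`σ₀ = I₀·γ̄·…·γ̄`, and for any morphism `δ : I[IS^m] → I[SA_k]` and any
`σ' ∈ ⋃_{d=0}^k F_d`: `σ₀ R^A σ'` iff `A = {0}` and `σ' = I₁·γ̄·…·γ̄`. -/
theorem base_collection_F0 (n k m : ℕ) (hn : 1 ≤ n) (hk1 : 1 ≤ k) (hkn : k ≤ n)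
    (hm : 1 ≤ m) :
    Fset n m 0 = {((Idf n 0, fun _ => gbar n) : IISState n m)} ∧
    ∀ (δ : SMorphism (IISmodel n m) (SAmodel n k)) (σ' : IISState n m),
      (∃ d, d ≤ k ∧ σ' ∈ Fset n m d) →
      ∀ A : Finset (Fin (n + 1)), A.Nonempty →
        (Rrel n m k δ A (Idf n 0, fun _ => gbar n) σ' ↔
          (A = {0} ∧ σ' = (Idf n 1, fun _ => gbar n))) := by
  obtain ⟨n, rfl⟩ : ∃ n', n = n' + 1 := ⟨n - 1, by omega⟩
  refine ⟨Fset0, ?_⟩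
  intro δ σ' _ A hAne
  constructor
  · rintro ⟨hrel, hne, hbound, ⟨d, e, hdk, hek, hdF, heF, hmax, hde, hed⟩, hdec, hdec'⟩
    have hd0 : d = 0 := by
      by_contra hd0
      have h1 := congrFun hdF.1 1
      dsimp only at h1
      rw [Idf_zero, Idf_ge_one (by omega)] at h1
      exact zero_ne_one h1
    subst hd0
    have he1 : e = 1 := by
      rcases Nat.eq_zero_or_pos e with rfl | hpos
      · exfalso
        rw [Fset0] at heF
        exact hne (Set.mem_singleton_iff.mp heF).symm
      · omega
    subst he1
    have hcard : A.card = 1 := by simpa using hmax.symm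
    obtain ⟨a, rfl⟩ := Finset.card_eq_one.mp hcard
    have hrela : iisView (Idf (n + 1) 0) m (fun _ => gbar (n + 1)) a
        = iisView σ'.1 m σ'.2 a := hrel a (by simp)
    have hXa : Idf (n + 1) 0 a = σ'.1 a := inputEq m _ _ _ _ a hrela
    have hσ'1 : σ'.1 = Idf (n + 1) 1 := heF.1
    rw [hσ'1] at hXa
    have hav : (a : ℕ) ≤ 1 := by simpa using hbound a (by simp)
    have ha0 : a = 0 := by
      rcases Nat.le_one_iff_eq_zero_or_eq_one.mp hav with h | h
      · exact Fin.ext (by rw [Fin.val_zero]; exact h)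
      · exfalso
        have ha1 : a = 1 := Fin.ext (by rw [Fin.val_one]; exact h)
        rw [ha1, Idf_zero, Idf_one_one] at hXa
        exact zero_ne_one hXa
    subst ha0
    refine ⟨rfl, ?_⟩
    have hview : iisView (Idf (n + 1) 0) m (fun _ => gbar (n + 1)) 0
        = iisView σ'.1 m σ'.2 0 := hrel 0 (by simp)
    have hview' : iisView (Idf (n + 1) 0) m (fun _ => gbar (n + 1)) 0
        = iisView (Idf (n + 1) 1) m σ'.2 0 := by
      rw [← hσ'1]; exact hview
    have hk2 := key_views m σ'.2 hview'
    have hgb : σ'.2 = fun _ => gbar (n + 1) := by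
      funext i
      obtain ⟨l, hl⟩ := heF.2 i
      exact rest1_char _ l hl (hk2 i)
    exact Prod.ext hσ'1 hgb
  · rintro ⟨rfl, rfl⟩
    have hd0 : (δ.smap ((Idf (n + 1) 0, fun _ => gbar (n + 1)) :
        IISState (n + 1) m)).val.2 0 = 0 := decide_zero δ _ rfl 0
    have hvv : (IISmodel (n + 1) m).vert (Idf (n + 1) 0, fun _ => gbar (n + 1)) 0
        = (IISmodel (n + 1) m).vert (Idf (n + 1) 1, fun _ => gbar (n + 1)) 0 :=
      view0_eq m _ _ (by show Idf (n + 1) 0 0 = Idf (n + 1) 1 0; rw [Idf_zero, Idf_one_zero])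
    refine ⟨?_, ?_, ?_, ⟨0, 1, Nat.zero_le k, hk1, ?_, ?_, ?_, by omega, by omega⟩, ?_, ?_⟩
    · intro a ha
      have ha0 : a = 0 := by simpa using ha
      subst ha0
      exact hvv
    · intro hEq
      have h1 := congrFun (congrArg Prod.fst hEq) 1
      dsimp only at h1
      rw [Idf_zero, Idf_one_one] at h1
      exact zero_ne_one h1
    · intro a ha
      have ha0 : a = 0 := by simpa using ha
      subst ha0
      simp
    · rw [Fset0]
      rfl
    · exact ⟨rfl, fun i => ⟨[{0}, {1}], restform_gbar_one n⟩⟩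
    · simp
    · exact models_DEC0 δ _ hd0
    · have h1 := δ.vert_comm (Idf (n + 1) 0, fun _ => gbar (n + 1)) 0
      have h2 := δ.vert_comm (Idf (n + 1) 1, fun _ => gbar (n + 1)) 0
      rw [hvv] at h1
      have h3 := h1.symm.trans h2
      have h4 := congrArg Prod.snd h3
      have h5 : (δ.smap ((Idf (n + 1) 0, fun _ => gbar (n + 1)) :
            IISState (n + 1) m)).val.2 0
          = (δ.smap ((Idf (n + 1) 1, fun _ => gbar (n + 1)) :
            IISState (n + 1) m)).val.2 0 := congrArg Prod.snd h4
      exact models_DEC0 δ _ (by rw [← h5, hd0])
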